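/- Let λ ∈ (0,1], λ' ∈ [0,1) with λ > λ', and define φ : M₂(ℂ) → M₂(ℂ) by φ(A) = diag(λa₁₁ + (1−λ)a₂₂, λ'a₁₁ + (1−λ')a₂₂). Set Q = λ − λ'. Then for every t > 0, I + tφ is invertible and tφ(I + tφ)^{-1}(A) = μ₁(A)e₁₁ + μ₂(A)e₂₂, where μ₁ = t((λ + tQ)ν₁ + (1−λ)ν₂)/D_t and μ₂ = t(λ'ν₁ + (1−λ'+tQ)ν₂)/D_t with νⱼ(A) = a_{jj} and D_t = 1 + t(1+Q) + t²Q. In particular μ₁ and μ₂ are positive linear functionals, so φ is q-positive. -/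

import Mathlib

open Matrix Filter
open scoped Matrix.Norms.L2Operator ComplexOrder

noncomputable section

def IsCompletelyPositive {n : Type*} [Fintype n] [DecidableEq n]
    (φ : Matrix n n ℂ →ₗ[ℂ] Matrix n n ℂ) : Prop :=
  ∀ (k : ℕ) (A : Matrix (Fin k × n) (Fin k × n) ℂ), A.PosSemidef →
    Matrix.PosSemidef (Matrix.of fun p q : Fin k × n =>
      φ (Matrix.of fun a b => A (p.1, a) (q.1, b)) p.2 q.2)

def Inv2 {n : Type*} [Fintype n] [DecidableEq n]
    (f g : Matrix n n ℂ →ₗ[ℂ] Matrix n n ℂ) : Prop :=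
  f ∘ₗ g = LinearMap.id ∧ g ∘ₗ f = LinearMap.id

def QPositive {n : Type*} [Fintype n] [DecidableEq n]
    (φ : Matrix n n ℂ →ₗ[ℂ] Matrix n n ℂ) : Prop :=
  (∀ c : ℝ, c < 0 → ¬ Module.End.HasEigenvalue φ (c : ℂ)) ∧
  ∀ t : ℝ, 0 ≤ t → ∃ ψ, Inv2 (LinearMap.id + (t : ℂ) • φ) ψ ∧
    IsCompletelyPositive (φ ∘ₗ ψ)

def toC {n : Type*} [Fintype n] [DecidableEq n]
    (φ : Matrix n n ℂ →ₗ[ℂ] Matrix n n ℂ) : Matrix n n ℂ →L[ℂ] Matrix n n ℂ :=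
  LinearMap.toContinuousLinearMap φ

def conjMap {n : Type*} [Fintype n] [DecidableEq n]
    (φ : Matrix n n ℂ →ₗ[ℂ] Matrix n n ℂ) (U : Matrix n n ℂ) :
    Matrix n n ℂ →ₗ[ℂ] Matrix n n ℂ where
  toFun A := Uᴴ * φ (U * A * Uᴴ) * U
  map_add' A B := by simp [Matrix.mul_add, Matrix.add_mul]
  map_smul' c A := by simp [Matrix.mul_smul, Matrix.smul_mul]

/-- Schur (Hadamard) multiplication by a fixed matrix, as a linear map. -/
def schurMap {n : Type*} [Fintype n] [DecidableEq n] (M : Matrix n n ℂ) :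
    Matrix n n ℂ →ₗ[ℂ] Matrix n n ℂ where
  toFun A := Matrix.of fun i j => M i j * A i j
  map_add' A B := by ext i j; simp [Matrix.add_apply]; ring
  map_smul' c A := by ext i j; simp [Matrix.smul_apply]; ring

/-- A state on `Mₙ(ℂ)`. -/
def IsState {n : Type*} [Fintype n] [DecidableEq n]
    (ρ : Matrix n n ℂ →ₗ[ℂ] ℂ) : Prop :=
  ρ 1 = 1 ∧ ∀ A, A.PosSemidef → ∃ r : ℝ, 0 ≤ r ∧ ρ A = (r : ℂ)

def IsProjection {n : Type*} [Fintype n] [DecidableEq n] (P : Matrix n n ℂ) : Prop :=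
  P.IsHermitian ∧ P * P = P

/-- φ ≥_q ψ. -/
def QSub {n : Type*} [Fintype n] [DecidableEq n]
    (φ ψ : Matrix n n ℂ →ₗ[ℂ] Matrix n n ℂ) : Prop :=
  ∀ t : ℝ, 0 ≤ t → ∀ χ₁ χ₂, Inv2 (LinearMap.id + (t : ℂ) • φ) χ₁ →
    Inv2 (LinearMap.id + (t : ℂ) • ψ) χ₂ →
    IsCompletelyPositive (φ ∘ₗ χ₁ - ψ ∘ₗ χ₂)

def QPure {n : Type*} [Fintype n] [DecidableEq n]
    (φ : Matrix n n ℂ →ₗ[ℂ] Matrix n n ℂ) : Prop :=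
  QPositive φ ∧ ∀ ψ, QPositive ψ → QSub φ ψ →
    (ψ = 0 ∨ ∃ s : ℝ, 0 ≤ s ∧ ∀ χ, Inv2 (LinearMap.id + (s : ℂ) • φ) χ → ψ = φ ∘ₗ χ)

/-- The block map `[[A,B],[C,D]] ↦ [[φ(A), σ(B)],[σ*(C), Ψ(D)]]`. -/
def cornerMap {n k : Type*} [Fintype n] [Fintype k] [DecidableEq n] [DecidableEq k]
    (φ : Matrix n n ℂ →ₗ[ℂ] Matrix n n ℂ) (Ψ : Matrix k k ℂ →ₗ[ℂ] Matrix k k ℂ)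
    (σ : Matrix n k ℂ →ₗ[ℂ] Matrix n k ℂ) :
    Matrix (n ⊕ k) (n ⊕ k) ℂ →ₗ[ℂ] Matrix (n ⊕ k) (n ⊕ k) ℂ where
  toFun M := Matrix.fromBlocks (φ M.toBlocks₁₁) (σ M.toBlocks₁₂)
      ((σ (M.toBlocks₂₁)ᴴ)ᴴ) (Ψ M.toBlocks₂₂)
  map_add' M N := by
    have h11 : (M + N).toBlocks₁₁ = M.toBlocks₁₁ + N.toBlocks₁₁ := rfl
    have h12 : (M + N).toBlocks₁₂ = M.toBlocks₁₂ + N.toBlocks₁₂ := rfl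
    have h21 : (M + N).toBlocks₂₁ = M.toBlocks₂₁ + N.toBlocks₂₁ := rfl
    have h22 : (M + N).toBlocks₂₂ = M.toBlocks₂₂ + N.toBlocks₂₂ := rfl
    simp only [h11, h12, h21, h22, map_add, conjTranspose_add, Matrix.fromBlocks_add]
  map_smul' c M := by
    have h11 : (c • M).toBlocks₁₁ = c • M.toBlocks₁₁ := rfl
    have h12 : (c • M).toBlocks₁₂ = c • M.toBlocks₁₂ := rfl
    have h21 : (c • M).toBlocks₂₁ = c • M.toBlocks₂₁ := rfl
    have h22 : (c • M).toBlocks₂₂ = c • M.toBlocks₂₂ := rfl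
    simp only [h11, h12, h21, h22, RingHom.id_apply, _root_.map_smul,
      conjTranspose_smul, star_star, Matrix.fromBlocks_smul]

/-- The diagonal-part map on `M₂(ℂ)`. -/
def diagMap : Matrix (Fin 2) (Fin 2) ℂ →ₗ[ℂ] Matrix (Fin 2) (Fin 2) ℂ where
  toFun A := Matrix.diagonal fun i => A i i
  map_add' A B := by ext i j; by_cases h : i = j <;> simp [Matrix.diagonal, h]
  map_smul' c A := by ext i j; by_cases h : i = j <;> simp [Matrix.diagonal, h]

/-- The map `A ↦ diag(λa₁₁ + (1-λ)a₂₂, λ'a₁₁ + (1-λ')a₂₂)`. -/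
def phiD (l l' : ℝ) : Matrix (Fin 2) (Fin 2) ℂ →ₗ[ℂ] Matrix (Fin 2) (Fin 2) ℂ where
  toFun A := Matrix.diagonal
    ![(l : ℂ) * A 0 0 + (1 - (l : ℂ)) * A 1 1,
      (l' : ℂ) * A 0 0 + (1 - (l' : ℂ)) * A 1 1]
  map_add' A B := by
    ext i j
    fin_cases i <;> fin_cases j <;>
      simp [Matrix.diagonal, Matrix.add_apply] <;> ring
  map_smul' c A := by
    ext i j
    fin_cases i <;> fin_cases j <;>
      simp [Matrix.diagonal, Matrix.smul_apply] <;> ring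

/-! `phiD l l'` only reads the diagonal of its argument and returns a diagonal matrix:
`φ(A) = diag (C · diag A)` with `C = [[λ, 1-λ], [λ', 1-λ']]`. Such diagonal mixing maps compose
by multiplying their coefficient matrices, so `I + tφ` is inverted by
`A ↦ A - diag A + diag ((1 + tC)⁻¹ · diag A)` and `φ (I + tφ)⁻¹` is the diagonal mixing map of
`C (1 + tC)⁻¹ = D_t⁻¹ [[λ + tQ, 1-λ], [λ', 1-λ'+tQ]]`, where `D_t = det (1 + tC) > 0`.
A diagonal mixing map with nonnegative coefficients `c_ij` is the sum of the maps
`A ↦ Kᴴ A K` with `K = √c_ij E_ji`, hence completely positive. A negative eigenvalue `c`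
is excluded because its eigenvectors would lie in the kernel of the invertible map `I - c⁻¹φ`. -/

section DiagonalMixing

open scoped Kronecker

variable {n : Type*} [Fintype n] [DecidableEq n]

def krausMap (K : Matrix n n ℂ) : Matrix n n ℂ →ₗ[ℂ] Matrix n n ℂ where
  toFun A := Kᴴ * A * K
  map_add' A B := by rw [Matrix.mul_add, Matrix.add_mul]
  map_smul' c A := by rw [Matrix.mul_smul, Matrix.smul_mul, RingHom.id_apply]

theorem isCompletelyPositive_krausMap (K : Matrix n n ℂ) :
    IsCompletelyPositive (krausMap K) := by
  intro k A hA
  convert hA.conjTranspose_mul_mul_same ((1 : Matrix (Fin k) (Fin k) ℂ) ⊗ₖ K) using 1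
  ext ⟨p₁, p₂⟩ ⟨q₁, q₂⟩
  simp [krausMap, Matrix.mul_apply, Fintype.sum_prod_type, Matrix.one_apply, Finset.sum_mul,
    apply_ite (starRingEnd ℂ), ite_mul]

theorem krausMap_single (i j : n) (w : ℂ) (A : Matrix n n ℂ) :
    krausMap (single i j w) A = single j j (star w * A i i * w) := by
  simp [krausMap, conjTranspose_single]

theorem IsCompletelyPositive.add {φ ψ : Matrix n n ℂ →ₗ[ℂ] Matrix n n ℂ}
    (hφ : IsCompletelyPositive φ) (hψ : IsCompletelyPositive ψ) :
    IsCompletelyPositive (φ + ψ) :=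
  fun k A hA => (hφ k A hA).add (hψ k A hA)

theorem isCompletelyPositive_sum {ι : Type*} (s : Finset ι)
    {φ : ι → Matrix n n ℂ →ₗ[ℂ] Matrix n n ℂ} (hφ : ∀ i ∈ s, IsCompletelyPositive (φ i)) :
    IsCompletelyPositive (∑ i ∈ s, φ i) := by
  refine Finset.sum_induction _ IsCompletelyPositive (fun _ _ => IsCompletelyPositive.add) ?_ hφ
  exact fun _ _ _ => Matrix.PosSemidef.zero

def diagMixMap (C : Matrix n n ℂ) : Matrix n n ℂ →ₗ[ℂ] Matrix n n ℂ where
  toFun A := diagonal (C *ᵥ A.diag)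
  map_add' A B := by simp [diag_add, mulVec_add]
  map_smul' c A := by simp [diag_smul, mulVec_smul]

@[simp]
theorem diagMixMap_apply (C A : Matrix n n ℂ) : diagMixMap C A = diagonal (C *ᵥ A.diag) := rfl

theorem diagMixMap_add (C C' : Matrix n n ℂ) :
    diagMixMap (C + C') = diagMixMap C + diagMixMap C' := by
  ext A : 1
  simp [add_mulVec]

theorem diagMixMap_smul (s : ℂ) (C : Matrix n n ℂ) :
    diagMixMap (s • C) = s • diagMixMap C := by
  ext A : 1
  simp [smul_mulVec]

theorem diagMixMap_comp (C C' : Matrix n n ℂ) :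
    diagMixMap C ∘ₗ diagMixMap C' = diagMixMap (C * C') := by
  ext A : 1
  simp [mulVec_mulVec]

theorem diagMixMap_eq_sum_krausMap (S : Matrix n n ℂ) :
    diagMixMap (of fun i j => star (S i j) * S i j) = ∑ i, ∑ j, krausMap (single j i (S i j)) := by
  ext A : 1
  simp only [diagMixMap_apply, LinearMap.sum_apply, krausMap_single]
  rw [← sum_single_eq_diagonal]
  refine Finset.sum_congr rfl fun i _ => ?_
  simp_rw [mulVec, dotProduct, of_apply, diag_apply, mul_right_comm _ (S i _) (A _ _)]
  exact map_sum (singleAddMonoidHom i i) _ _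

theorem isCompletelyPositive_diagMixMap {C : Matrix n n ℂ} (hC : ∀ i j, 0 ≤ C i j) :
    IsCompletelyPositive (diagMixMap C) := by
  choose x hx0 hx using fun i j => RCLike.nonneg_iff_exists_ofReal.1 (hC i j)
  set S : Matrix n n ℂ := of fun i j => (√(x i j) : ℂ)
  have hC : C = of fun i j => star (S i j) * S i j := by
    ext i j
    simp [S, ← hx, ← Complex.ofReal_mul, Real.mul_self_sqrt (hx0 i j)]
  rw [hC, diagMixMap_eq_sum_krausMap]
  exact isCompletelyPositive_sum _ fun i _ => isCompletelyPositive_sum _ fun j _ =>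
    isCompletelyPositive_krausMap _

theorem diagMixMap_apply_self_nonneg {C A : Matrix n n ℂ} (hC : ∀ i j, 0 ≤ C i j)
    (hA : A.PosSemidef) (i : n) : 0 ≤ diagMixMap C A i i := by
  simpa [mulVec, dotProduct] using
    Finset.sum_nonneg fun j _ => mul_nonneg (hC i j) (hA.diag_nonneg (i := j))

def diagMixResolvent (C : Matrix n n ℂ) (s : ℂ) : Matrix n n ℂ →ₗ[ℂ] Matrix n n ℂ :=
  LinearMap.id - diagMixMap 1 + diagMixMap (1 + s • C)⁻¹

theorem inv2_diagMixResolvent {C : Matrix n n ℂ} {s : ℂ} (h : IsUnit (1 + s • C).det) :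
    Inv2 (LinearMap.id + s • diagMixMap C) (diagMixResolvent C s) := by
  have hl : diagMixMap (1 + s • C)⁻¹ + s • diagMixMap (C * (1 + s • C)⁻¹) = diagMixMap 1 := by
    rw [← diagMixMap_smul, ← diagMixMap_add, ← smul_mul_assoc, ← one_add_mul, mul_nonsing_inv _ h]
  have hr : diagMixMap (1 + s • C)⁻¹ + s • diagMixMap ((1 + s • C)⁻¹ * C) = diagMixMap 1 := by
    rw [← diagMixMap_smul, ← diagMixMap_add, ← mul_smul_comm, ← mul_one_add, nonsing_inv_mul _ h]
  constructor
  · simp only [diagMixResolvent, LinearMap.add_comp, LinearMap.comp_add, LinearMap.comp_sub,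
      LinearMap.smul_comp, LinearMap.id_comp, LinearMap.comp_id, diagMixMap_comp, mul_one]
    rw [hl]
    abel
  · simp only [diagMixResolvent, LinearMap.add_comp, LinearMap.sub_comp, LinearMap.comp_add,
      LinearMap.comp_smul, LinearMap.id_comp, LinearMap.comp_id, diagMixMap_comp, one_mul]
    rw [sub_self, zero_add, add_assoc, hr]
    abel

theorem diagMixMap_comp_diagMixResolvent (C : Matrix n n ℂ) (s : ℂ) :
    diagMixMap C ∘ₗ diagMixResolvent C s = diagMixMap (C * (1 + s • C)⁻¹) := by
  simp only [diagMixResolvent, LinearMap.comp_add, LinearMap.comp_sub, LinearMap.comp_id,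
    diagMixMap_comp, mul_one, sub_self, zero_add]

theorem Inv2.right_unique {f g g' : Matrix n n ℂ →ₗ[ℂ] Matrix n n ℂ}
    (h : Inv2 f g) (h' : Inv2 f g') : g' = g := by
  rw [← LinearMap.id_comp g', ← h.2, LinearMap.comp_assoc, h'.1, LinearMap.comp_id]

theorem not_hasEigenvalue_neg_of_inv2 {φ : Matrix n n ℂ →ₗ[ℂ] Matrix n n ℂ}
    (hφ : ∀ t : ℝ, 0 < t → ∃ ψ, Inv2 (LinearMap.id + (t : ℂ) • φ) ψ) {c : ℝ} (hc : c < 0) :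
    ¬ Module.End.HasEigenvalue φ c := by
  intro h
  obtain ⟨v, hv⟩ := h.exists_hasEigenvector
  obtain ⟨ψ, hψ⟩ := hφ (-c⁻¹) (by simpa using hc)
  have hker : (LinearMap.id + ((-c⁻¹ : ℝ) : ℂ) • φ : Module.End ℂ (Matrix n n ℂ)) v = 0 := by
    have hc0 : (c : ℂ) ≠ 0 := by exact_mod_cast hc.ne
    rw [LinearMap.add_apply, LinearMap.smul_apply, hv.apply_eq_smul, smul_smul, Complex.ofReal_neg,
      Complex.ofReal_inv, neg_mul, inv_mul_cancel₀ hc0, neg_one_smul, LinearMap.id_apply,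
      add_neg_cancel]
  apply hv.2
  simpa only [LinearMap.comp_apply, hker, map_zero, LinearMap.id_apply] using
    (LinearMap.congr_fun hψ.2 v).symm

end DiagonalMixing

section PhiD

variable {l l' t : ℝ}

def phiDCoeff (l l' : ℝ) : Matrix (Fin 2) (Fin 2) ℂ := !![(l : ℂ), 1 - l; l', 1 - l']

theorem phiD_eq_diagMixMap (l l' : ℝ) : phiD l l' = diagMixMap (phiDCoeff l l') := by
  ext A i j
  fin_cases i <;> fin_cases j <;> simp [phiD, phiDCoeff, dotProduct]

def resolventDenom (l l' t : ℝ) : ℝ := 1 + t * (1 + (l - l')) + t ^ 2 * (l - l')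

theorem resolventDenom_pos (hll : l' ≤ l) (ht : 0 ≤ t) : 0 < resolventDenom l l' t := by
  unfold resolventDenom
  have : 0 ≤ l - l' := sub_nonneg.2 hll
  positivity

theorem det_one_add_smul_phiDCoeff (l l' t : ℝ) :
    (1 + (t : ℂ) • phiDCoeff l l').det = resolventDenom l l' t := by
  simp [det_fin_two, phiDCoeff, resolventDenom]
  ring

def phiDResolventCoeff (l l' t : ℝ) : Matrix (Fin 2) (Fin 2) ℝ :=
  (resolventDenom l l' t)⁻¹ • !![l + t * (l - l'), 1 - l; l', 1 - l' + t * (l - l')]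

theorem phiDCoeff_mul_inv (hll : l' ≤ l) (ht : 0 ≤ t) :
    phiDCoeff l l' * (1 + (t : ℂ) • phiDCoeff l l')⁻¹ = (phiDResolventCoeff l l' t).map (↑) := by
  have hD : (resolventDenom l l' t : ℂ) ≠ 0 := by exact_mod_cast (resolventDenom_pos hll ht).ne'
  rw [inv_def, det_one_add_smul_phiDCoeff, adjugate_fin_two]
  ext i j
  fin_cases i <;> fin_cases j <;> simp [phiDCoeff, phiDResolventCoeff, Ring.inverse_eq_inv'] <;>
    field_simp <;> ring

theorem inv2_phiD_diagMixResolvent (hll : l' ≤ l) (ht : 0 ≤ t) :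
    Inv2 (LinearMap.id + (t : ℂ) • phiD l l') (diagMixResolvent (phiDCoeff l l') t) := by
  rw [phiD_eq_diagMixMap]
  refine inv2_diagMixResolvent (isUnit_iff_ne_zero.2 ?_)
  rw [det_one_add_smul_phiDCoeff]
  exact_mod_cast (resolventDenom_pos hll ht).ne'

theorem phiD_comp_diagMixResolvent (hll : l' ≤ l) (ht : 0 ≤ t) :
    phiD l l' ∘ₗ diagMixResolvent (phiDCoeff l l') t =
      diagMixMap ((phiDResolventCoeff l l' t).map (↑)) := by
  rw [phiD_eq_diagMixMap, diagMixMap_comp_diagMixResolvent, phiDCoeff_mul_inv hll ht]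

theorem phiDResolventCoeff_nonneg (hl : l ≤ 1) (hl' : 0 ≤ l') (hll : l' ≤ l) (ht : 0 ≤ t)
    (i j : Fin 2) : 0 ≤ phiDResolventCoeff l l' t i j := by
  have hQ : 0 ≤ t * (l - l') := mul_nonneg ht (sub_nonneg.2 hll)
  refine mul_nonneg (inv_nonneg.2 (resolventDenom_pos hll ht).le) ?_
  fin_cases i <;> fin_cases j <;> simp <;> linarith

theorem smul_diagMixMap_phiDResolventCoeff_apply (l l' t : ℝ) (A : Matrix (Fin 2) (Fin 2) ℂ) :
    ((t : ℂ) • diagMixMap ((phiDResolventCoeff l l' t).map (↑))) A =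
      diagonal
        ![(t : ℂ) * (((l : ℂ) + (t : ℂ) * ((l : ℂ) - (l' : ℂ))) * A 0 0 + (1 - (l : ℂ)) * A 1 1) /
            (1 + (t : ℂ) * (1 + ((l : ℂ) - (l' : ℂ))) + (t : ℂ) ^ 2 * ((l : ℂ) - (l' : ℂ))),
          (t : ℂ) * ((l' : ℂ) * A 0 0 + (1 - (l' : ℂ) + (t : ℂ) * ((l : ℂ) - (l' : ℂ))) * A 1 1) /
            (1 + (t : ℂ) * (1 + ((l : ℂ) - (l' : ℂ))) + (t : ℂ) ^ 2 * ((l : ℂ) - (l' : ℂ)))] := by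
  ext i j
  fin_cases i <;> fin_cases j <;> simp [phiDResolventCoeff, resolventDenom] <;> ring

end PhiD

/-- explicit resolvent formula for `phiD` and its q-positivity. -/
theorem stmt_13 (l l' : ℝ) (hl : l ∈ Set.Ioc (0 : ℝ) 1)
    (hl' : l' ∈ Set.Ico (0 : ℝ) 1) (hll : l' < l) :
    (∀ t : ℝ, 0 < t → ∃ ψ, Inv2 (LinearMap.id + (t : ℂ) • phiD l l') ψ) ∧
    (∀ t : ℝ, 0 < t → ∀ ψ, Inv2 (LinearMap.id + (t : ℂ) • phiD l l') ψ →
      ∀ A : Matrix (Fin 2) (Fin 2) ℂ,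
        ((t : ℂ) • (phiD l l' ∘ₗ ψ)) A = Matrix.diagonal
          ![(t : ℂ) * (((l : ℂ) + (t : ℂ) * ((l : ℂ) - (l' : ℂ))) * A 0 0 +
              (1 - (l : ℂ)) * A 1 1) /
              (1 + (t : ℂ) * (1 + ((l : ℂ) - (l' : ℂ))) +
                (t : ℂ) ^ 2 * ((l : ℂ) - (l' : ℂ))),
            (t : ℂ) * ((l' : ℂ) * A 0 0 +
              (1 - (l' : ℂ) + (t : ℂ) * ((l : ℂ) - (l' : ℂ))) * A 1 1) /
              (1 + (t : ℂ) * (1 + ((l : ℂ) - (l' : ℂ))) +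
                (t : ℂ) ^ 2 * ((l : ℂ) - (l' : ℂ)))]) ∧
    (∀ t : ℝ, 0 < t → ∀ A : Matrix (Fin 2) (Fin 2) ℂ, A.PosSemidef →
      (∃ r : ℝ, 0 ≤ r ∧
        (t : ℂ) * (((l : ℂ) + (t : ℂ) * ((l : ℂ) - (l' : ℂ))) * A 0 0 +
          (1 - (l : ℂ)) * A 1 1) /
          (1 + (t : ℂ) * (1 + ((l : ℂ) - (l' : ℂ))) +
            (t : ℂ) ^ 2 * ((l : ℂ) - (l' : ℂ))) = (r : ℂ)) ∧
      (∃ r : ℝ, 0 ≤ r ∧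
        (t : ℂ) * ((l' : ℂ) * A 0 0 +
          (1 - (l' : ℂ) + (t : ℂ) * ((l : ℂ) - (l' : ℂ))) * A 1 1) /
          (1 + (t : ℂ) * (1 + ((l : ℂ) - (l' : ℂ))) +
            (t : ℂ) ^ 2 * ((l : ℂ) - (l' : ℂ))) = (r : ℂ))) ∧
    QPositive (phiD l l') := by
  have hres (t : ℝ) (ht : 0 ≤ t) := inv2_phiD_diagMixResolvent hll.le ht
  have hinv (t : ℝ) (ht : 0 < t) : ∃ ψ, Inv2 (LinearMap.id + (t : ℂ) • phiD l l') ψ :=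
    ⟨_, hres t ht.le⟩
  have hK (t : ℝ) (ht : 0 ≤ t) (i j : Fin 2) :
      0 ≤ ((phiDResolventCoeff l l' t).map (↑) : Matrix (Fin 2) (Fin 2) ℂ) i j :=
    Complex.zero_le_real.2 (phiDResolventCoeff_nonneg hl.2 hl'.1 hll.le ht i j)
  refine ⟨hinv, fun t ht ψ hψ A => ?_, fun t ht A hA => ?_,
    fun c hc => not_hasEigenvalue_neg_of_inv2 hinv hc, fun t ht => ⟨_, hres t ht, ?_⟩⟩
  · rw [(hres t ht.le).right_unique hψ, phiD_comp_diagMixResolvent hll.le ht.le,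
      smul_diagMixMap_phiDResolventCoeff_apply]
  · have hμ (i : Fin 2) : ∃ r : ℝ, 0 ≤ r ∧
        ((t : ℂ) • diagMixMap ((phiDResolventCoeff l l' t).map (↑))) A i i = r := by
      obtain ⟨r, hr, h⟩ := RCLike.nonneg_iff_exists_ofReal.1 <|
        mul_nonneg (Complex.zero_le_real.2 ht.le) (diagMixMap_apply_self_nonneg (hK t ht.le) hA i)
      exact ⟨r, hr, h.symm⟩
    simp_rw [smul_diagMixMap_phiDResolventCoeff_apply] at hμ
    exact ⟨by simpa using hμ 0, by simpa using hμ 1⟩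
  · rw [phiD_comp_diagMixResolvent hll.le ht]
    exact isCompletelyPositive_diagMixMap (hK t ht)
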